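/- For any ground program P, the operator T_P has a least fixed point, this least fixed point is a model of P, and it is less than or equal to every model of P in the pointwise order; that is, the least fixed point of T_P is the least model of P. -/

import Mathlib

/-!
Every connective and hedge is monotone, so `T_P` is a monotone map on the complete lattice of
interpretations and Knaster–Tarski gives a least fixed point, which is also its least prefixed
point. By residuation, `C_i(x, r) ≤ y ↔ r ≤ R_i(y, x)`, the prefixed points `T_P(f) ≤ f` are
exactly the models of `P`.
-/

namespace FLLP

def CL {n : ℕ} (x y : Fin (n+1)) : Fin (n+1) :=
  ⟨x.val + y.val - n, by have := x.isLt; have := y.isLt; omega⟩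

def RL {n : ℕ} (j i : Fin (n+1)) : Fin (n+1) :=
  if h : i ≤ j then ⟨n, n.lt_succ_self⟩
  else ⟨n + j.val - i.val, by
    have h' : j.val < i.val := Fin.lt_def.mp (lt_of_not_ge h)
    have := i.isLt; omega⟩

def RG {n : ℕ} (j i : Fin (n+1)) : Fin (n+1) :=
  if i ≤ j then ⟨n, n.lt_succ_self⟩ else j

inductive Body (A H : Type) : Type where
  | atom : A → Body A H
  | andG : Body A H → Body A H → Body A H
  | andL : Body A H → Body A H → Body A H
  | or   : Body A H → Body A H → Body A H
  | hedge : H → Body A H → Body A H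
  deriving DecidableEq

def eval {n : ℕ} {A H : Type} (hinv : H → Fin (n+1) → Fin (n+1))
    (f : A → Fin (n+1)) : Body A H → Fin (n+1)
  | .atom a => f a
  | .andG B₁ B₂ => min (eval hinv f B₁) (eval hinv f B₂)
  | .andL B₁ B₂ => CL (eval hinv f B₁) (eval hinv f B₂)
  | .or B₁ B₂ => max (eval hinv f B₁) (eval hinv f B₂)
  | .hedge h B => hinv h (eval hinv f B)

inductive Imp : Type where
  | luka : Imp
  | godel : Imp
  deriving DecidableEq

def tnorm {n : ℕ} : Imp → Fin (n+1) → Fin (n+1) → Fin (n+1)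
  | .luka => CL
  | .godel => min

def implicator {n : ℕ} : Imp → Fin (n+1) → Fin (n+1) → Fin (n+1)
  | .luka => RL
  | .godel => RG

structure Program (n : ℕ) (A H : Type) [DecidableEq A] [DecidableEq H] : Type where
  rules : Finset (A × Body A H × Fin (n+1) × Imp)
  facts : Finset (A × Fin (n+1))

noncomputable def TP {n : ℕ} {A H : Type} [DecidableEq A] [DecidableEq H]
    (P : Program n A H) (hinv : H → Fin (n+1) → Fin (n+1))
    (f : A → Fin (n+1)) : A → Fin (n+1) := fun a =>
  max ((P.rules.filter (fun R => R.1 = a)).sup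
        (fun R => tnorm R.2.2.2 (eval hinv f R.2.1) R.2.2.1))
      ((P.facts.filter (fun F => F.1 = a)).sup (fun F => F.2))

def isModel {n : ℕ} {A H : Type} [DecidableEq A] [DecidableEq H]
    (P : Program n A H) (hinv : H → Fin (n+1) → Fin (n+1))
    (f : A → Fin (n+1)) : Prop :=
  (∀ R ∈ P.rules, R.2.2.1 ≤ implicator R.2.2.2 (f R.1) (eval hinv f R.2.1)) ∧
  (∀ F ∈ P.facts, F.2 ≤ f F.1)

section Residuation

variable {n : ℕ}

lemma CL_le_iff_le_RL (b r h : Fin (n+1)) : CL b r ≤ h ↔ r ≤ RL h b := by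
  have := r.isLt
  unfold CL RL
  split_ifs with hbh <;> simp only [Fin.le_def] at * <;> omega

lemma min_le_iff_le_RG (b r h : Fin (n+1)) : min b r ≤ h ↔ r ≤ RG h b := by
  unfold RG
  split_ifs with hbh
  · exact iff_of_true ((min_le_left _ _).trans hbh) (Fin.le_def.mpr (Nat.le_of_lt_succ r.isLt))
  · simp [hbh]

lemma tnorm_le_iff_le_implicator (i : Imp) (b r h : Fin (n+1)) :
    tnorm i b r ≤ h ↔ r ≤ implicator i h b := by
  cases i
  · exact CL_le_iff_le_RL b r h
  · exact min_le_iff_le_RG b r h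

lemma CL_le_CL {x x' y y' : Fin (n+1)} (hx : x ≤ x') (hy : y ≤ y') : CL x y ≤ CL x' y' := by
  simp only [CL, Fin.le_def] at *
  omega

lemma tnorm_mono_left (i : Imp) (r : Fin (n+1)) : Monotone (fun b => tnorm i b r) := by
  intro b b' hb
  cases i
  · exact CL_le_CL hb le_rfl
  · exact min_le_min hb le_rfl

end Residuation

section ImmediateConsequences

lemma eval_mono {n : ℕ} {A H : Type} (hinv : H → Fin (n+1) → Fin (n+1))
    (hmono : ∀ h, Monotone (hinv h)) (B : Body A H) :
    Monotone (fun f : A → Fin (n+1) => eval hinv f B) := by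
  intro f g hfg
  induction B with
  | atom a => exact hfg a
  | andG B₁ B₂ ih₁ ih₂ => exact min_le_min ih₁ ih₂
  | andL B₁ B₂ ih₁ ih₂ => exact CL_le_CL ih₁ ih₂
  | or B₁ B₂ ih₁ ih₂ => exact max_le_max ih₁ ih₂
  | hedge h B ih => exact hmono h ih

variable {n : ℕ} {A H : Type} [DecidableEq A] [DecidableEq H]
  (P : Program n A H) (hinv : H → Fin (n+1) → Fin (n+1))

lemma TP_mono (hmono : ∀ h, Monotone (hinv h)) : Monotone (TP P hinv) := by
  intro f g hfg a
  refine max_le_max (Finset.sup_mono_fun fun R _ => ?_) le_rfl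
  exact tnorm_mono_left _ _ (eval_mono hinv hmono _ hfg)

lemma TP_apply_le_iff (f : A → Fin (n+1)) (a : A) (x : Fin (n+1)) :
    TP P hinv f a ≤ x ↔
      (∀ R ∈ P.rules, R.1 = a → tnorm R.2.2.2 (eval hinv f R.2.1) R.2.2.1 ≤ x) ∧
      (∀ F ∈ P.facts, F.1 = a → F.2 ≤ x) := by
  simp only [TP, max_le_iff, Finset.sup_le_iff, Finset.mem_filter, and_imp]

lemma TP_le_iff_isModel (f : A → Fin (n+1)) : TP P hinv f ≤ f ↔ isModel P hinv f := by
  simp only [Pi.le_def, TP_apply_le_iff, isModel, ← tnorm_le_iff_le_implicator]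
  constructor
  · intro hf
    exact ⟨fun R hR => (hf R.1).1 R hR rfl, fun F hF => (hf F.1).2 F hF rfl⟩
  · rintro ⟨hrules, hfacts⟩ a
    exact ⟨fun R hR hRa => hRa ▸ hrules R hR, fun F hF hFa => hFa ▸ hfacts F hF⟩

end ImmediateConsequences

theorem TP_least_fixed_point_general (n : ℕ) (A H : Type)
    [DecidableEq A] [DecidableEq H]
    (hinv : H → Fin (n+1) → Fin (n+1)) (hmono : ∀ h, Monotone (hinv h))
    (P : Program n A H) :
    ∃ g : A → Fin (n+1),
      TP P hinv g = g ∧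
      (∀ f : A → Fin (n+1), TP P hinv f = f → ∀ a, g a ≤ f a) ∧
      isModel P hinv g ∧
      (∀ f : A → Fin (n+1), isModel P hinv f → ∀ a, g a ≤ f a) := by
  let T : (A → Fin (n+1)) →o (A → Fin (n+1)) := ⟨TP P hinv, TP_mono P hinv hmono⟩
  refine ⟨OrderHom.lfp T, T.map_lfp, ?_, ?_, ?_⟩
  · intro f hf
    exact T.lfp_le hf.le
  · exact (TP_le_iff_isModel P hinv _).mp T.map_lfp.le
  · intro f hf
    exact T.lfp_le ((TP_le_iff_isModel P hinv f).mpr hf)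

theorem TP_least_fixed_point (n : ℕ) (hn : 1 ≤ n) (A H : Type) [Fintype A] [Fintype H]
    [DecidableEq A] [DecidableEq H]
    (hinv : H → Fin (n+1) → Fin (n+1)) (hmono : ∀ h, Monotone (hinv h))
    (P : Program n A H) :
    ∃ g : A → Fin (n+1),
      TP P hinv g = g ∧
      (∀ f : A → Fin (n+1), TP P hinv f = f → ∀ a, g a ≤ f a) ∧
      isModel P hinv g ∧
      (∀ f : A → Fin (n+1), isModel P hinv f → ∀ a, g a ≤ f a) :=
  TP_least_fixed_point_general n A H hinv hmono P

end FLLP
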